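/- Root test: let (a_n)_n = [a_{nε}]_s ∈ ℂ~_s. Assume there are [k_ε] ∈ ℕ~ with all k_ε ∈ ℕ and L = [L_ε] ∈ ℝ~ with 0 < L < 1 such that for ε small: |a_{nε}|^{1/n} ≤ L_ε for all n ∈ ℕ with n ≥ k_ε. Then (|a_{nε}|)_{n,ε} is ρ-moderate over hypersums, the hyperseries Σ_{n∈ℕ~} |a_n| converges in ℝ~, and consequently the hyperseries Σ_{n∈ℕ~} a_n converges in ℂ~. -/

import Mathlib

open Filter

noncomputable section

/-- `P ε` holds for all ε small. -/
def EvS (P : ℝ → Prop) : Prop := ∃ ε₀ : ℝ, 0 < ε₀ ∧ ε₀ ≤ 1 ∧ ∀ ε : ℝ, 0 < ε → ε ≤ ε₀ → P ε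

theorem EvS.mono {P Q : ℝ → Prop} (h : EvS P) (h2 : ∀ ε, 0 < ε → ε ≤ 1 → P ε → Q ε) : EvS Q := by
  obtain ⟨e, he, he1, hP⟩ := h
  exact ⟨e, he, he1, fun ε hε hεe => h2 ε hε (hεe.trans he1) (hP ε hε hεe)⟩

theorem EvS.and {P Q : ℝ → Prop} (h : EvS P) (h' : EvS Q) : EvS fun ε => P ε ∧ Q ε := by
  obtain ⟨e, he, he1, hP⟩ := h
  obtain ⟨e', he', he1', hQ⟩ := h'
  exact ⟨min e e', lt_min he he', le_trans (min_le_left _ _) he1, fun ε hε hm =>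
    ⟨hP ε hε (le_trans hm (min_le_left _ _)), hQ ε hε (le_trans hm (min_le_right _ _))⟩⟩

/-- A gauge: a nonincreasing net of reals in (0,1] tending to 0. -/
structure Gauge where
  ρ : ℝ → ℝ
  pos : ∀ ε : ℝ, 0 < ε → ε ≤ 1 → 0 < ρ ε
  le_one : ∀ ε : ℝ, 0 < ε → ε ≤ 1 → ρ ε ≤ 1
  anti : ∀ ε ε' : ℝ, 0 < ε → ε ≤ ε' → ε' ≤ 1 → ρ ε' ≤ ρ ε
  to_zero : Tendsto ρ (nhdsWithin 0 (Set.Ioi 0)) (nhds 0)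

namespace Gauge

theorem evs_le (g : Gauge) {δ : ℝ} (hδ : 0 < δ) : EvS fun ε => g.ρ ε ≤ δ := by
  have h := g.to_zero.eventually_lt_const hδ
  rw [eventually_nhdsWithin_iff, Metric.eventually_nhds_iff] at h
  obtain ⟨e, he, hP⟩ := h
  refine ⟨min (e / 2) 1, by positivity, min_le_right _ _, fun ε hε hεe => ?_⟩
  have hd : dist ε 0 < e := by
    rw [Real.dist_eq, sub_zero, abs_of_pos hε]
    have h1 : ε ≤ e / 2 := le_trans hεe (min_le_left _ _)
    linarith
  exact (hP hd (Set.mem_Ioi.mpr hε)).le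

variable {𝕜 : Type} [RCLike 𝕜]

/-- ρ-moderate nets. -/
def Mod (g : Gauge) (x : ℝ → 𝕜) : Prop := ∃ N : ℕ, EvS fun ε => ‖x ε‖ ≤ g.ρ ε ^ (-(N : ℤ))

/-- ρ-negligible nets. -/
def Negl (g : Gauge) (x : ℝ → 𝕜) : Prop := ∀ q : ℕ, EvS fun ε => ‖x ε‖ ≤ g.ρ ε ^ q

theorem Negl.mod {g : Gauge} {x : ℝ → 𝕜} (h : g.Negl x) : g.Mod x := by
  refine ⟨0, (h 0).mono fun ε hε hε1 hx => ?_⟩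
  simpa using hx

theorem negl_sub_self (g : Gauge) (x : ℝ → 𝕜) : g.Negl fun ε => x ε - x ε := fun q =>
  ⟨1, one_pos, le_refl 1, fun ε hε hε1 => by
    simp only [sub_self, norm_zero]
    exact pow_nonneg (g.pos ε hε hε1).le q⟩

theorem negl_of_evs_eq (g : Gauge) {x y : ℝ → 𝕜} (h : EvS fun ε => x ε = y ε) :
    g.Negl fun ε => x ε - y ε := fun q => h.mono fun ε hε hε1 he => by
  show ‖x ε - y ε‖ ≤ _
  rw [he, sub_self, norm_zero]; exact pow_nonneg (g.pos ε hε hε1).le q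

theorem Negl.symm_sub {g : Gauge} {x y : ℝ → 𝕜} (h : g.Negl fun ε => x ε - y ε) :
    g.Negl fun ε => y ε - x ε := fun q => (h q).mono fun ε _ _ hx => by rwa [norm_sub_rev]

theorem Negl.add {g : Gauge} {x y : ℝ → 𝕜} (hx : g.Negl x) (hy : g.Negl y) :
    g.Negl fun ε => x ε + y ε := by
  intro q
  refine (((hx (q+1)).and (hy (q+1))).and (g.evs_le (by norm_num : (0:ℝ) < 1/2))).mono
    fun ε hε hε1 h => ?_
  obtain ⟨⟨h1, h2⟩, h3⟩ := h
  have hρ := g.pos ε hε hε1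
  calc ‖x ε + y ε‖ ≤ ‖x ε‖ + ‖y ε‖ := norm_add_le _ _
    _ ≤ g.ρ ε ^ (q+1) + g.ρ ε ^ (q+1) := add_le_add h1 h2
    _ = 2 * g.ρ ε * g.ρ ε ^ q := by ring
    _ ≤ 1 * g.ρ ε ^ q := by
        apply mul_le_mul_of_nonneg_right _ (pow_nonneg hρ.le q)
        linarith
    _ = g.ρ ε ^ q := one_mul _

theorem Negl.neg {g : Gauge} {y : ℝ → 𝕜} (hy : g.Negl y) : g.Negl fun ε => -(y ε) :=
  fun q => (hy q).mono fun ε _ _ h => by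
    show ‖-(y ε)‖ ≤ _
    rwa [norm_neg]

theorem Negl.sub {g : Gauge} {x y : ℝ → 𝕜} (hx : g.Negl x) (hy : g.Negl y) :
    g.Negl fun ε => x ε - y ε := by
  have h := hx.add hy.neg
  have heq : (fun ε => x ε + -(y ε)) = fun ε => x ε - y ε := by funext ε; ring
  rwa [heq] at h

theorem Negl.triangle {g : Gauge} {x y z : ℝ → 𝕜} (h1 : g.Negl fun ε => x ε - y ε)
    (h2 : g.Negl fun ε => y ε - z ε) : g.Negl fun ε => x ε - z ε := by
  have h := h1.add h2
  have heq : (fun ε => (x ε - y ε) + (y ε - z ε)) = fun ε => x ε - z ε := by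
    funext ε; ring
  rwa [heq] at h

end Gauge

namespace Gauge

variable {𝕜 : Type} [RCLike 𝕜]

theorem zpow_neg_le (g : Gauge) {ε : ℝ} (hε : 0 < ε) (hε1 : ε ≤ 1) {a b : ℕ} (h : a ≤ b) :
    g.ρ ε ^ (-(a:ℤ)) ≤ g.ρ ε ^ (-(b:ℤ)) := by
  apply zpow_le_zpow_right_of_le_one₀ (g.pos ε hε hε1) (g.le_one ε hε hε1)
  omega

theorem Mod.of_norm_le {g : Gauge} {x : ℝ → 𝕜} {y : ℝ → ℝ} (hy : g.Mod y)
    (h : ∀ ε, 0 < ε → ε ≤ 1 → ‖x ε‖ ≤ |y ε|) : g.Mod x := by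
  obtain ⟨N, hN⟩ := hy
  exact ⟨N, hN.mono fun ε hε hε1 hb => le_trans (h ε hε hε1) (by rwa [Real.norm_eq_abs] at hb)⟩

theorem Mod.add {g : Gauge} {x y : ℝ → 𝕜} (hx : g.Mod x) (hy : g.Mod y) :
    g.Mod fun ε => x ε + y ε := by
  obtain ⟨N, hN⟩ := hx; obtain ⟨M, hM⟩ := hy
  refine ⟨N + M + 1, ((hN.and hM).and (g.evs_le (by norm_num : (0:ℝ) < 1/2))).mono
    fun ε hε hε1 h => ?_⟩
  obtain ⟨⟨h1, h2⟩, h3⟩ := h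
  have hρ := g.pos ε hε hε1
  have e1 : g.ρ ε ^ (-(N:ℤ)) ≤ g.ρ ε ^ (-((N+M:ℕ):ℤ)) := g.zpow_neg_le hε hε1 (by omega)
  have e2 : g.ρ ε ^ (-(M:ℤ)) ≤ g.ρ ε ^ (-((N+M:ℕ):ℤ)) := g.zpow_neg_le hε hε1 (by omega)
  have key : g.ρ ε ^ (-((N+M:ℕ):ℤ)) = g.ρ ε ^ (-((N+M+1:ℕ):ℤ)) * g.ρ ε := by
    rw [← zpow_add_one₀ hρ.ne']
    congr 1
    push_cast
    ring
  have hpos : (0:ℝ) < g.ρ ε ^ (-((N+M+1:ℕ):ℤ)) := zpow_pos hρ _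
  calc ‖x ε + y ε‖ ≤ ‖x ε‖ + ‖y ε‖ := norm_add_le _ _
    _ ≤ g.ρ ε ^ (-((N+M:ℕ):ℤ)) + g.ρ ε ^ (-((N+M:ℕ):ℤ)) := add_le_add (h1.trans e1) (h2.trans e2)
    _ = 2 * g.ρ ε * g.ρ ε ^ (-((N+M+1:ℕ):ℤ)) := by rw [key]; ring
    _ ≤ 1 * g.ρ ε ^ (-((N+M+1:ℕ):ℤ)) := by
        apply mul_le_mul_of_nonneg_right _ hpos.le
        linarith
    _ = g.ρ ε ^ (-((N+M+1:ℕ):ℤ)) := one_mul _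

theorem Mod.neg {g : Gauge} {x : ℝ → 𝕜} (hx : g.Mod x) : g.Mod fun ε => -(x ε) := by
  obtain ⟨N, hN⟩ := hx
  exact ⟨N, hN.mono fun ε _ _ h => by rwa [norm_neg]⟩

theorem Mod.sub {g : Gauge} {x y : ℝ → 𝕜} (hx : g.Mod x) (hy : g.Mod y) :
    g.Mod fun ε => x ε - y ε := by
  have h := hx.add hy.neg
  have heq : (fun ε => x ε + -(y ε)) = fun ε => x ε - y ε := by funext ε; ring
  rwa [heq] at h

theorem Mod.mul {g : Gauge} {x y : ℝ → 𝕜} (hx : g.Mod x) (hy : g.Mod y) :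
    g.Mod fun ε => x ε * y ε := by
  obtain ⟨N, hN⟩ := hx; obtain ⟨M, hM⟩ := hy
  refine ⟨N + M, (hN.and hM).mono fun ε hε hε1 h => ?_⟩
  obtain ⟨h1, h2⟩ := h
  have hρ := g.pos ε hε hε1
  calc ‖x ε * y ε‖ = ‖x ε‖ * ‖y ε‖ := norm_mul _ _
    _ ≤ g.ρ ε ^ (-(N:ℤ)) * g.ρ ε ^ (-(M:ℤ)) :=
        mul_le_mul h1 h2 (norm_nonneg _) (zpow_nonneg hρ.le _)
    _ = g.ρ ε ^ (-((N+M:ℕ):ℤ)) := by rw [← zpow_add₀ hρ.ne']; congr 1; push_cast; ring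

theorem Mod.norm {g : Gauge} {x : ℝ → 𝕜} (hx : g.Mod x) : g.Mod fun ε => ‖x ε‖ := by
  obtain ⟨N, hN⟩ := hx
  exact ⟨N, hN.mono fun ε _ _ h => by rwa [norm_norm]⟩

theorem Negl.mul_mod {g : Gauge} {x y : ℝ → 𝕜} (hx : g.Negl x) (hy : g.Mod y) :
    g.Negl fun ε => x ε * y ε := by
  obtain ⟨M, hM⟩ := hy
  intro q
  refine ((hx (q + M)).and hM).mono fun ε hε hε1 h => ?_
  obtain ⟨h1, h2⟩ := h
  have hρ := g.pos ε hε hε1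
  calc ‖x ε * y ε‖ = ‖x ε‖ * ‖y ε‖ := norm_mul _ _
    _ ≤ g.ρ ε ^ (q+M) * g.ρ ε ^ (-(M:ℤ)) :=
        mul_le_mul h1 h2 (norm_nonneg _) (pow_nonneg hρ.le _)
    _ = g.ρ ε ^ q := by
        rw [← zpow_natCast (g.ρ ε) (q+M), ← zpow_add₀ hρ.ne', ← zpow_natCast (g.ρ ε) q]
        congr 1; push_cast; ring

theorem mod_const (g : Gauge) (c : 𝕜) (hc : ‖c‖ ≤ 1) : g.Mod fun _ => c := by
  refine ⟨0, 1, one_pos, le_refl 1, fun ε hε hε1 => ?_⟩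
  simpa using hc

theorem mod_pow (g : Gauge) (q : ℕ) : g.Mod fun ε => g.ρ ε ^ q := by
  refine ⟨0, 1, one_pos, le_refl 1, fun ε hε hε1 => ?_⟩
  have hρ := g.pos ε hε hε1
  show ‖g.ρ ε ^ q‖ ≤ _
  rw [Real.norm_eq_abs, abs_of_nonneg (pow_nonneg hρ.le q)]
  simpa using pow_le_one₀ hρ.le (g.le_one ε hε hε1)

theorem mod_zpow_neg (g : Gauge) (q : ℕ) : g.Mod fun ε => g.ρ ε ^ (-(q:ℤ)) := by
  refine ⟨q, 1, one_pos, le_refl 1, fun ε hε hε1 => ?_⟩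
  have hρ := g.pos ε hε hε1
  show ‖g.ρ ε ^ (-(q:ℤ))‖ ≤ _
  rw [Real.norm_eq_abs, abs_of_nonneg (zpow_nonneg hρ.le _)]

/-- Hypernatural moderateness. -/
def NMod (g : Gauge) (n : ℝ → ℕ) : Prop := g.Mod fun ε => (n ε : ℝ)

end Gauge

instance gSetoid (g : Gauge) (𝕜 : Type) [RCLike 𝕜] : Setoid {x : ℝ → 𝕜 // g.Mod x} where
  r a b := g.Negl fun ε => a.1 ε - b.1 ε
  iseqv := ⟨fun a => g.negl_sub_self a.1, fun h => h.symm_sub, fun h h' => h.triangle h'⟩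

instance natSetoid (g : Gauge) : Setoid {n : ℝ → ℕ // g.NMod n} where
  r a b := g.Negl fun ε => (a.1 ε : ℝ) - (b.1 ε : ℝ)
  iseqv := ⟨fun a => g.negl_sub_self _, fun h => h.symm_sub, fun h h' => h.triangle h'⟩

/-- The ring of Robinson-Colombeau generalized numbers (ℂ~ for 𝕜 = ℂ, ℝ~ for 𝕜 = ℝ). -/
abbrev GQ (g : Gauge) (𝕜 : Type) [RCLike 𝕜] := Quotient (gSetoid g 𝕜)

abbrev Ct (g : Gauge) := GQ g ℂ
abbrev Rt (g : Gauge) := GQ g ℝ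

/-- The set of hypernatural numbers ℕ~. -/
abbrev Nt (g : Gauge) := Quotient (natSetoid g)

def GQ.mk (g : Gauge) {𝕜 : Type} [RCLike 𝕜] (x : ℝ → 𝕜) (h : g.Mod x) : GQ g 𝕜 :=
  Quotient.mk (gSetoid g 𝕜) ⟨x, h⟩

/-- `x` is a representative of the generalized number `z`. -/
def IsRep (g : Gauge) {𝕜 : Type} [RCLike 𝕜] (x : ℝ → 𝕜) (z : GQ g 𝕜) : Prop :=
  ∃ h : g.Mod x, GQ.mk g x h = z

def Nt.mk (g : Gauge) (n : ℝ → ℕ) (h : g.NMod n) : Nt g := Quotient.mk (natSetoid g) ⟨n, h⟩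

def Nt.IsRep (g : Gauge) (n : ℝ → ℕ) (m : Nt g) : Prop := ∃ h : g.NMod n, Nt.mk g n h = m

/-- dρ^q as an element of ℝ~. -/
def Gauge.dpow (g : Gauge) (q : ℕ) : Rt g := GQ.mk g (fun ε => g.ρ ε ^ q) (g.mod_pow q)

/-- dρ^(−q) as an element of ℝ~. -/
def Gauge.dpowNeg (g : Gauge) (q : ℕ) : Rt g := GQ.mk g (fun ε => g.ρ ε ^ (-(q:ℤ))) (g.mod_zpow_neg q)

def GQ.zero (g : Gauge) (𝕜 : Type) [RCLike 𝕜] : GQ g 𝕜 :=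
  GQ.mk g (fun _ => 0) (g.mod_const 0 (by simp))

def GQ.one (g : Gauge) (𝕜 : Type) [RCLike 𝕜] : GQ g 𝕜 :=
  GQ.mk g (fun _ => 1) (g.mod_const 1 (by simp))

variable {𝕜 : Type} [RCLike 𝕜]

/-- Order relation on ℝ~ (via some representatives). -/
def Rt.le (g : Gauge) (x y : Rt g) : Prop :=
  ∃ a b : {u : ℝ → ℝ // g.Mod u}, Quotient.mk (gSetoid g ℝ) a = x ∧
    Quotient.mk (gSetoid g ℝ) b = y ∧ EvS fun ε => a.1 ε ≤ b.1 ε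

/-- Strict order relation on ℝ~: `x < y` iff `y − x ≥ dρ^m` for some m. -/
def Rt.lt (g : Gauge) (x y : Rt g) : Prop :=
  ∃ a b : {u : ℝ → ℝ // g.Mod u}, Quotient.mk (gSetoid g ℝ) a = x ∧
    Quotient.mk (gSetoid g ℝ) b = y ∧ ∃ m : ℕ, EvS fun ε => g.ρ ε ^ m ≤ b.1 ε - a.1 ε

/-- Order on ℕ~. -/
def Nt.le (g : Gauge) (m n : Nt g) : Prop :=
  ∃ a b : {k : ℝ → ℕ // g.NMod k}, Quotient.mk (natSetoid g) a = m ∧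
    Quotient.mk (natSetoid g) b = n ∧ EvS fun ε => a.1 ε ≤ b.1 ε

/-- The relation `|z − w| < r` between generalized numbers, r ∈ ℝ~. -/
def GQ.absLt (g : Gauge) (z w : GQ g 𝕜) (r : Rt g) : Prop :=
  ∃ a b : {x : ℝ → 𝕜 // g.Mod x}, ∃ u : {x : ℝ → ℝ // g.Mod x},
    Quotient.mk (gSetoid g 𝕜) a = z ∧ Quotient.mk (gSetoid g 𝕜) b = w ∧
    Quotient.mk (gSetoid g ℝ) u = r ∧
    ∃ m : ℕ, EvS fun ε => ‖a.1 ε - b.1 ε‖ + g.ρ ε ^ m ≤ u.1 ε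

/-- The relation `|z − w| ≤ r`. -/
def GQ.absLe (g : Gauge) (z w : GQ g 𝕜) (r : Rt g) : Prop :=
  ∃ a b : {x : ℝ → 𝕜 // g.Mod x}, ∃ u : {x : ℝ → ℝ // g.Mod x},
    Quotient.mk (gSetoid g 𝕜) a = z ∧ Quotient.mk (gSetoid g 𝕜) b = w ∧
    Quotient.mk (gSetoid g ℝ) u = r ∧ EvS fun ε => ‖a.1 ε - b.1 ε‖ ≤ u.1 ε

/-- `x ∈ ℂ~` is invertible. -/
def GQ.Invertible (g : Gauge) (x : GQ g 𝕜) : Prop :=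
  ∃ a : {u : ℝ → 𝕜 // g.Mod u}, Quotient.mk (gSetoid g 𝕜) a = x ∧
    ∃ m : ℕ, EvS fun ε => g.ρ ε ^ m ≤ ‖a.1 ε‖

/-- l is the hyperlimit of the hypersequence a. -/
def HyperLim (g : Gauge) (a : Nt g → GQ g 𝕜) (l : GQ g 𝕜) : Prop :=
  ∀ q : ℕ, ∃ M : Nt g, ∀ n : Nt g, Nt.le g M n → GQ.absLt g (a n) l (g.dpow q)

/-- ρ-moderate over hypersums. -/
def Gauge.SMod (g : Gauge) (A : ℕ → ℝ → 𝕜) : Prop :=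
  ∀ N : ℝ → ℕ, g.NMod N → g.Mod fun ε => ∑ n ∈ Finset.range (N ε + 1), A n ε

/-- Hyperseries equivalence of coefficient nets. -/
def Gauge.SEquiv (g : Gauge) (A B : ℕ → ℝ → 𝕜) : Prop :=
  ∀ N M : ℝ → ℕ, g.NMod N → g.NMod M →
    g.Negl fun ε => ∑ n ∈ Finset.Icc (N ε) (M ε), (A n ε - B n ε)

theorem nat_eq_of_abs_sub_lt_one {a b : ℕ} (h : |(a:ℝ) - b| < 1) : a = b := by
  rcases lt_trichotomy a b with hlt | he | hgt
  · exfalso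
    have h1 : (a:ℝ) + 1 ≤ b := by exact_mod_cast Nat.succ_le_of_lt hlt
    have h2 := abs_lt.mp h
    linarith [h2.1]
  · exact he
  · exfalso
    have h1 : (b:ℝ) + 1 ≤ a := by exact_mod_cast Nat.succ_le_of_lt hgt
    have h2 := abs_lt.mp h
    linarith [h2.2]

theorem natEqEv (g : Gauge) {N M : ℝ → ℕ} (h : g.Negl fun ε => (N ε : ℝ) - M ε) :
    EvS fun ε => N ε = M ε := by
  refine ((h 1).and (g.evs_le (by norm_num : (0:ℝ) < 1/2))).mono fun ε hε hε1 hh => ?_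
  obtain ⟨h1, h2⟩ := hh
  apply nat_eq_of_abs_sub_lt_one
  have : ‖(N ε : ℝ) - M ε‖ = |(N ε : ℝ) - M ε| := Real.norm_eq_abs _
  rw [this] at h1
  calc |(N ε:ℝ) - M ε| ≤ g.ρ ε ^ 1 := h1
    _ = g.ρ ε := pow_one _
    _ ≤ 1/2 := h2
    _ < 1 := by norm_num

/-- Lift a representative-level construction indexed by hypernaturals to ℕ~. -/
def Nt.lift (g : Gauge) (F : (ℝ → ℕ) → ℝ → 𝕜)
    (hmod : ∀ N, g.NMod N → g.Mod (F N))
    (hcong : ∀ N M : ℝ → ℕ, EvS (fun ε => N ε = M ε) → EvS fun ε => F N ε = F M ε) :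
    Nt g → GQ g 𝕜 :=
  Quotient.lift (fun N => GQ.mk g (F N.1) (hmod N.1 N.2)) (by
    intro a b hab
    apply Quotient.sound
    exact g.negl_of_evs_eq (hcong a.1 b.1 (natEqEv g hab)))

def Nt.lift₂ (g : Gauge) (F : (ℝ → ℕ) → (ℝ → ℕ) → ℝ → 𝕜)
    (hmod : ∀ N M, g.NMod N → g.NMod M → g.Mod (F N M))
    (hcong : ∀ N N' M M' : ℝ → ℕ, EvS (fun ε => N ε = N' ε) → EvS (fun ε => M ε = M' ε) →
      EvS fun ε => F N M ε = F N' M' ε) :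
    Nt g → Nt g → GQ g 𝕜 :=
  Quotient.lift₂ (fun N M => GQ.mk g (F N.1 M.1) (hmod N.1 M.1 N.2 M.2)) (by
    intro a b a' b' ha hb
    apply Quotient.sound
    exact g.negl_of_evs_eq (hcong a.1 a'.1 b.1 b'.1 (natEqEv g ha) (natEqEv g hb)))

/-- The hypersequence of partial hypersums N ↦ Σ_{n=0}^{N} a_n. -/
def partialSum (g : Gauge) (A : ℕ → ℝ → 𝕜) (hA : g.SMod A) : Nt g → GQ g 𝕜 :=
  Nt.lift g (fun N ε => ∑ n ∈ Finset.range (N ε + 1), A n ε) (fun N hN => hA N hN)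
    (fun N M h => h.mono fun ε _ _ he => by (try simp only []); rw [he])

/-- The hyperseries Σ_{n∈ℕ~} a_n converges to s. -/
def HSConv (g : Gauge) (A : ℕ → ℝ → 𝕜) (hA : g.SMod A) (s : GQ g 𝕜) : Prop :=
  HyperLim g (partialSum g A hA) s

theorem Gauge.NMod.mono {g : Gauge} {a b : ℝ → ℕ} (hb : g.NMod b) (h : ∀ ε, a ε ≤ b ε) :
    g.NMod a := by
  refine Gauge.Mod.of_norm_le hb fun ε _ _ => ?_
  rw [Real.norm_eq_abs, abs_of_nonneg (Nat.cast_nonneg _), abs_of_nonneg (Nat.cast_nonneg _)]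
  exact_mod_cast h ε

theorem Gauge.SMod.range {g : Gauge} {A : ℕ → ℝ → 𝕜} (hA : g.SMod A) {N : ℝ → ℕ}
    (hN : g.NMod N) : g.Mod fun ε => ∑ n ∈ Finset.range (N ε), A n ε := by
  have hN' : g.NMod fun ε => N ε - 1 := hN.mono fun ε => Nat.sub_le _ _
  obtain ⟨K, hK⟩ := hA _ hN'
  refine ⟨K, hK.mono fun ε hε hε1 h => ?_⟩
  rcases Nat.eq_zero_or_pos (N ε) with h0 | h0
  · show ‖∑ n ∈ Finset.range (N ε), A n ε‖ ≤ _
    rw [h0]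
    simp only [Finset.range_zero, Finset.sum_empty, norm_zero]
    exact le_trans (norm_nonneg _) h
  · have he : N ε - 1 + 1 = N ε := Nat.succ_pred_eq_of_pos h0
    show ‖∑ n ∈ Finset.range (N ε), A n ε‖ ≤ _
    rw [← he]
    exact h

theorem Gauge.SMod.termMod {g : Gauge} {A : ℕ → ℝ → 𝕜} (hA : g.SMod A) {N : ℝ → ℕ}
    (hN : g.NMod N) : g.Mod fun ε => A (N ε) ε := by
  have h := (hA N hN).sub (hA.range hN)
  have heq : (fun ε => (∑ n ∈ Finset.range (N ε + 1), A n ε) -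
      ∑ n ∈ Finset.range (N ε), A n ε) = fun ε => A (N ε) ε := by
    funext ε
    rw [Finset.sum_range_succ]
    ring
  rwa [heq] at h

/-- The extension of the terms of a hyperseries to ℕ~ : n ↦ a_n. -/
def GQ.term (g : Gauge) (A : ℕ → ℝ → 𝕜) (hA : g.SMod A) : Nt g → GQ g 𝕜 :=
  Nt.lift g (fun N ε => A (N ε) ε) (fun _ hN => hA.termMod hN)
    (fun N M h => h.mono fun ε _ _ he => by (try simp only []); rw [he])

theorem norm_sum_Icc_le (A : ℕ → 𝕜) (N M : ℕ) :
    ‖∑ n ∈ Finset.Icc N M, A n‖ ≤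
      ‖∑ n ∈ Finset.range (M+1), A n‖ + ‖∑ n ∈ Finset.range N, A n‖ := by
  rcases le_or_gt N (M+1) with h | h
  · have key : (∑ n ∈ Finset.range N, A n) + (∑ n ∈ Finset.Icc N M, A n)
        = ∑ n ∈ Finset.range (M+1), A n := by
      rw [Finset.range_eq_Ico, Finset.range_eq_Ico, ← Finset.Ico_add_one_right_eq_Icc N M]
      exact Finset.sum_Ico_consecutive A (Nat.zero_le N) h
    have heq : ∑ n ∈ Finset.Icc N M, A n
        = (∑ n ∈ Finset.range (M+1), A n) - ∑ n ∈ Finset.range N, A n := by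
      rw [← key]; ring
    rw [heq]
    exact norm_sub_le _ _
  · rw [Finset.Icc_eq_empty (by omega)]
    simp only [Finset.sum_empty, norm_zero]
    positivity

theorem Gauge.SMod.IccMod {g : Gauge} {A : ℕ → ℝ → 𝕜} (hA : g.SMod A) {N M : ℝ → ℕ}
    (hN : g.NMod N) (hM : g.NMod M) :
    g.Mod fun ε => ∑ n ∈ Finset.Icc (N ε) (M ε), A n ε := by
  have h1 := (hA M hM).norm
  have h2 := (hA.range hN).norm
  refine Gauge.Mod.of_norm_le (h1.add h2) fun ε _ _ => ?_
  have hnn : (0:ℝ) ≤ ‖∑ n ∈ Finset.range (M ε + 1), A n ε‖ + ‖∑ n ∈ Finset.range (N ε), A n ε‖ :=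
    add_nonneg (norm_nonneg _) (norm_nonneg _)
  rw [abs_of_nonneg hnn]
  exact norm_sum_Icc_le _ _ _

/-- The hypersum Σ_{n=N}^{M} a_n as a function of N, M ∈ ℕ~. -/
def hypersum (g : Gauge) (A : ℕ → ℝ → 𝕜) (hA : g.SMod A) : Nt g → Nt g → GQ g 𝕜 :=
  Nt.lift₂ g (fun N M ε => ∑ n ∈ Finset.Icc (N ε) (M ε), A n ε)
    (fun _ _ hN hM => hA.IccMod hN hM)
    (fun N N' M M' h h' => (h.and h').mono fun ε _ _ he => by
      (try simp only []); rw [he.1, he.2])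

theorem Gauge.NMod.add {g : Gauge} {a b : ℝ → ℕ} (ha : g.NMod a) (hb : g.NMod b) :
    g.NMod fun ε => a ε + b ε := by
  have h := Gauge.Mod.add (𝕜 := ℝ) ha hb
  show g.Mod fun ε => ((a ε + b ε : ℕ) : ℝ)
  have heq : (fun ε => ((a ε + b ε : ℕ) : ℝ)) = fun ε => ((a ε : ℝ) + (b ε : ℝ)) := by
    funext ε; push_cast; ring
  rwa [heq]

/-- Addition on ℕ~. -/
def Nt.add (g : Gauge) : Nt g → Nt g → Nt g :=
  Quotient.lift₂ (fun a b => Nt.mk g (fun ε => a.1 ε + b.1 ε) (a.2.add b.2)) (by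
    intro a b a' b' ha hb
    apply Quotient.sound
    have h := ((natEqEv g ha).and (natEqEv g hb))
    exact g.negl_of_evs_eq (h.mono fun ε _ _ he => by
      show ((a.1 ε + b.1 ε : ℕ) : ℝ) = ((a'.1 ε + b'.1 ε : ℕ) : ℝ)
      rw [he.1, he.2]))

/-- Subtraction on generalized numbers. -/
def GQ.sub (g : Gauge) : GQ g 𝕜 → GQ g 𝕜 → GQ g 𝕜 :=
  Quotient.lift₂ (fun a b => GQ.mk g (fun ε => a.1 ε - b.1 ε) (a.2.sub b.2)) (by
    intro a b a' b' ha hb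
    apply Quotient.sound
    show g.Negl _
    have h := Gauge.Negl.sub ha hb
    have heq : (fun ε => (a.1 ε - a'.1 ε) - (b.1 ε - b'.1 ε))
        = fun ε => (a.1 ε - b.1 ε) - (a'.1 ε - b'.1 ε) := by funext ε; ring
    rwa [heq] at h)

/-- Multiplication on generalized numbers. -/
def GQ.mul (g : Gauge) : GQ g 𝕜 → GQ g 𝕜 → GQ g 𝕜 :=
  Quotient.lift₂ (fun a b => GQ.mk g (fun ε => a.1 ε * b.1 ε) (a.2.mul b.2)) (by
    intro a b a' b' ha hb
    apply Quotient.sound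
    show g.Negl _
    have h1 : g.Negl fun ε => (a.1 ε - a'.1 ε) * b.1 ε := Gauge.Negl.mul_mod ha b.2
    have h2 : g.Negl fun ε => (b.1 ε - b'.1 ε) * a'.1 ε := Gauge.Negl.mul_mod hb a'.2
    have h := h1.add h2
    have heq : (fun ε => (a.1 ε - a'.1 ε) * b.1 ε + (b.1 ε - b'.1 ε) * a'.1 ε)
        = fun ε => a.1 ε * b.1 ε - a'.1 ε * b'.1 ε := by funext ε; ring
    rwa [heq] at h)

/-- The absolute value |·| : ℂ~ → ℝ~. -/
def GQ.abs (g : Gauge) : GQ g 𝕜 → Rt g :=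
  Quotient.lift (fun a => GQ.mk g (fun ε => ‖a.1 ε‖) a.2.norm) (by
    intro a b hab
    apply Quotient.sound
    show g.Negl _
    intro q
    refine (hab q).mono fun ε _ _ h => ?_
    show ‖‖a.1 ε‖ - ‖b.1 ε‖‖ ≤ _
    rw [Real.norm_eq_abs]
    exact le_trans (abs_norm_sub_norm_le _ _) h)

/-- Weakly ρ-moderate coefficient nets. -/
def Gauge.WMod (g : Gauge) (a : ℕ → ℝ → ℂ) : Prop :=
  ∃ Q R : ℕ, EvS fun ε => ∀ n : ℕ, ‖a n ε‖ ≤ g.ρ ε ^ (-((n * Q + R : ℕ) : ℤ))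

/-- Strong ρ-equivalence of coefficient nets. -/
def Gauge.StrEquiv (g : Gauge) (a b : ℕ → ℝ → ℂ) : Prop :=
  ∀ q r : ℕ, EvS fun ε => ∀ n : ℕ, ‖a n ε - b n ε‖ ≤ g.ρ ε ^ (n * q + r)

/-- The net of radii of convergence r_ε = (limsup_n |a_{nε}|^{1/n})⁻¹ ∈ [0,∞]. -/
def radNet (a : ℕ → ℝ → ℂ) (ε : ℝ) : ENNReal :=
  (Filter.limsup (fun n : ℕ => ENNReal.ofReal (‖a n ε‖ ^ ((n : ℝ)⁻¹))) Filter.atTop)⁻¹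

/-- Condition (i): |z − c| < rad (a_n)_c, as classes (via representatives). -/
def RadLt (g : Gauge) (a : ℕ → ℝ → ℂ) (z c : Ct g) : Prop :=
  ∃ zr cr : ℝ → ℂ, ∃ a' : ℕ → ℝ → ℂ, IsRep g zr z ∧ IsRep g cr c ∧
    g.WMod a' ∧ g.StrEquiv a a' ∧
    ∃ m : ℕ, EvS fun ε => ENNReal.ofReal (‖zr ε - cr ε‖ + g.ρ ε ^ m) ≤ radNet a' ε

/-- The coefficient net of the hyper-power series Σ a_n (z−c)^n. -/
def PSeriesNet (a : ℕ → ℝ → ℂ) (zr cr : ℝ → ℂ) : ℕ → ℝ → ℂ :=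
  fun n ε => a n ε * (zr ε - cr ε) ^ n

/-- Conditions (ii)-(iv) of the definition of the set of convergence, for given
representatives. -/
def ConvConds (g : Gauge) (a : ℕ → ℝ → ℂ) (zr cr : ℝ → ℂ) (z : Ct g) : Prop :=
  ∃ hS : g.SMod (PSeriesNet a zr cr),
    (EvS fun ε => Summable fun n : ℕ => PSeriesNet a zr cr n ε) ∧
    (∃ hm : g.Mod fun ε => ∑' n : ℕ, PSeriesNet a zr cr n ε,
      HyperLim g (partialSum g _ hS) (GQ.mk g _ hm)) ∧
    (∀ zr' : ℝ → ℂ, IsRep g zr' z →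
      (EvS fun ε => Summable fun n : ℕ => (n : ℂ) * a n ε * (zr' ε - cr ε) ^ (n - 1)) ∧
      g.Mod fun ε => ∑' n : ℕ, (n : ℂ) * a n ε * (zr' ε - cr ε) ^ (n - 1))

/-- The set of convergence σ((a_n)_c, c) of a hyper-power series. -/
def convSet (g : Gauge) (a : ℕ → ℝ → ℂ) (c : Ct g) : Set (Ct g) :=
  { z | RadLt g a z c ∧
      ∃ zr cr : ℝ → ℂ, ∃ a' : ℕ → ℝ → ℂ, IsRep g zr z ∧ IsRep g cr c ∧
        g.WMod a' ∧ g.StrEquiv a a' ∧ ConvConds g a' zr cr z }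

/-- Sharply open subsets of ℂ~. -/
def SharplyOpen (g : Gauge) (U : Set (Ct g)) : Prop :=
  ∀ z ∈ U, ∃ r : Rt g, Rt.lt g (GQ.zero g ℝ) r ∧ ∀ w : Ct g, GQ.absLt g w z r → w ∈ U

/-- `P ε` for all small ε in L. -/
def EvSOn (L : Set ℝ) (P : ℝ → Prop) : Prop :=
  ∃ ε₀ : ℝ, 0 < ε₀ ∧ ε₀ ≤ 1 ∧ ∀ ε ∈ L, 0 < ε → ε ≤ ε₀ → P ε

/-- x ∈ ℂ~ is invertible on the subpoint L. -/
def GQ.InvertibleOn (g : Gauge) {𝕜 : Type} [RCLike 𝕜] (L : Set ℝ) (x : GQ g 𝕜) : Prop :=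
  ∃ a : {u : ℝ → 𝕜 // g.Mod u}, Quotient.mk (gSetoid g 𝕜) a = x ∧
    ∃ m : ℕ, EvSOn L fun ε => g.ρ ε ^ m ≤ ‖a.1 ε‖

theorem Gauge.nmod_const (g : Gauge) (c : ℕ) : g.NMod fun _ => c := by
  refine ⟨c + 1, (g.evs_le (by positivity : (0:ℝ) < 1/(c+1))).mono fun ε hε hε1 h3 => ?_⟩
  have hρ := g.pos ε hε hε1
  show ‖((c:ℕ) : ℝ)‖ ≤ _
  rw [Real.norm_eq_abs, abs_of_nonneg (Nat.cast_nonneg _)]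
  have hc1 : (0:ℝ) < (c:ℝ) + 1 := by positivity
  calc (c:ℝ) ≤ 1 / g.ρ ε := by
        rw [le_div_iff₀ hρ]
        calc (c:ℝ) * g.ρ ε ≤ (c:ℝ) * (1/(c+1)) :=
              mul_le_mul_of_nonneg_left h3 (Nat.cast_nonneg c)
          _ ≤ 1 := by rw [mul_one_div, div_le_one hc1]; linarith
    _ = g.ρ ε ^ (-((1:ℕ):ℤ)) := by
        rw [show (-((1:ℕ):ℤ)) = (-1:ℤ) by norm_num, zpow_neg_one, one_div]
    _ ≤ g.ρ ε ^ (-((c+1:ℕ):ℤ)) := g.zpow_neg_le hε hε1 (by omega)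

theorem Gauge.SMod.shift {g : Gauge} {𝕜 : Type} [RCLike 𝕜] {A : ℕ → ℝ → 𝕜}
    (hA : g.SMod A) (N₀ : ℕ) : g.SMod fun n ε => A (n + N₀) ε := by
  intro K hK
  have h1 := hA (fun ε => N₀ + K ε) ((g.nmod_const N₀).add hK)
  have h2 := hA.range (g.nmod_const N₀)
  have h := h1.sub h2
  have heq : (fun ε => (∑ n ∈ Finset.range (N₀ + K ε + 1), A n ε) -
      ∑ n ∈ Finset.range N₀, A n ε) = fun ε => ∑ n ∈ Finset.range (K ε + 1), A (n + N₀) ε := by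
    funext ε
    have e1 : (∑ n ∈ Finset.range N₀, A n ε) + (∑ n ∈ Finset.Ico N₀ (N₀ + K ε + 1), A n ε)
        = ∑ n ∈ Finset.range (N₀ + K ε + 1), A n ε :=
      Finset.sum_range_add_sum_Ico _ (by omega)
    have e2 : ∑ n ∈ Finset.Ico N₀ (N₀ + K ε + 1), A n ε
        = ∑ n ∈ Finset.range (K ε + 1), A (N₀ + n) ε := by
      rw [Finset.sum_Ico_eq_sum_range, show N₀ + K ε + 1 - N₀ = K ε + 1 by omega]
    rw [← e1, e2]
    rw [add_sub_cancel_left]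
    exact Finset.sum_congr rfl fun n _ => by rw [Nat.add_comm]
  rwa [heq] at h

/-! ### Auxiliary lemmas for the root test -/

theorem aux_bernoulli {x : ℝ} (hx0 : 0 ≤ x) (hx1 : x ≤ 1) {n : ℕ} (hn : 0 < (n : ℝ) * x) :
    (1 - x) ^ n ≤ ((n : ℝ) * x)⁻¹ := by
  have h1 : 1 + (n : ℝ) * x ≤ (1 + x) ^ n := one_add_mul_le_pow (by linarith) n
  have h2 : (0 : ℝ) ≤ (1 - x) ^ n := pow_nonneg (by linarith) n
  have h3 : (1 - x) ^ n * ((n : ℝ) * x) ≤ (1 - x) ^ n * (1 + x) ^ n := by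
    apply mul_le_mul_of_nonneg_left _ h2
    nlinarith
  have h4 : (1 - x) ^ n * (1 + x) ^ n = ((1 - x) * (1 + x)) ^ n := (mul_pow _ _ _).symm
  have h5 : ((1 - x) * (1 + x)) ^ n ≤ 1 := by
    apply pow_le_one₀ <;> nlinarith
  rw [inv_eq_one_div, le_div_iff₀ hn]
  calc (1 - x) ^ n * ((n : ℝ) * x) ≤ (1 - x) ^ n * (1 + x) ^ n := h3
    _ = ((1 - x) * (1 + x)) ^ n := h4
    _ ≤ 1 := h5

theorem aux_summable {f : ℕ → ℝ} (hf0 : ∀ n, 0 ≤ f n) {Lv : ℝ} (hL0 : 0 ≤ Lv) (hL1 : Lv < 1)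
    {k : ℕ} (h : ∀ n, k ≤ n → f n ≤ Lv ^ n) : Summable f := by
  rw [← summable_nat_add_iff k]
  have hg : Summable fun n : ℕ => Lv ^ (n + k) := by
    simpa [pow_add] using (summable_geometric_of_lt_one hL0 hL1).mul_right (Lv ^ k)
  exact Summable.of_nonneg_of_le (fun n => hf0 _) (fun n => h _ (by omega)) hg

theorem aux_tail {f : ℕ → ℝ} (hf0 : ∀ n, 0 ≤ f n) {Lv : ℝ} (hL0 : 0 ≤ Lv) (hL1 : Lv < 1)
    {k : ℕ} (h : ∀ n, k ≤ n → f n ≤ Lv ^ n) {N : ℕ} (hN : k ≤ N) :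
    ∑' n : ℕ, f (n + N) ≤ Lv ^ N * (1 - Lv)⁻¹ := by
  have hsum : Summable f := aux_summable hf0 hL0 hL1 h
  have hgeo : Summable fun n : ℕ => Lv ^ (n + N) := by
    simpa [pow_add] using (summable_geometric_of_lt_one hL0 hL1).mul_right (Lv ^ N)
  have h1 := Summable.tsum_le_tsum (fun n => h (n + N) (by omega))
    ((summable_nat_add_iff N).mpr hsum) hgeo
  refine h1.trans (le_of_eq ?_)
  calc ∑' n : ℕ, Lv ^ (n + N) = ∑' n : ℕ, Lv ^ n * Lv ^ N := by
        refine tsum_congr fun n => ?_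
        rw [pow_add]
    _ = (∑' n : ℕ, Lv ^ n) * Lv ^ N := tsum_mul_right
    _ = Lv ^ N * (1 - Lv)⁻¹ := by rw [tsum_geometric_of_lt_one hL0 hL1, mul_comm]

theorem Gauge.aux_one_le (g : Gauge) {ε : ℝ} (hε : 0 < ε) (hε1 : ε ≤ 1) (c : ℕ) :
    1 ≤ g.ρ ε ^ (-(c : ℤ)) := by
  have := g.zpow_neg_le hε hε1 (Nat.zero_le c)
  simpa using this

theorem Gauge.aux_two (g : Gauge) {ε : ℝ} (hε : 0 < ε) (hε1 : ε ≤ 1) (hhalf : g.ρ ε ≤ 1 / 2)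
    (c : ℕ) : 2 * g.ρ ε ^ (-(c : ℤ)) ≤ g.ρ ε ^ (-((c + 1 : ℕ) : ℤ)) := by
  have hρ := g.pos ε hε hε1
  have key : g.ρ ε ^ (-(c : ℤ)) = g.ρ ε ^ (-((c + 1 : ℕ) : ℤ)) * g.ρ ε := by
    rw [← zpow_add_one₀ hρ.ne']
    congr 1
    push_cast
    ring
  have hp : 0 < g.ρ ε ^ (-((c + 1 : ℕ) : ℤ)) := zpow_pos hρ _
  rw [key]
  nlinarith

theorem Gauge.aux_mul (g : Gauge) {ε : ℝ} (hε : 0 < ε) (hε1 : ε ≤ 1) (a b : ℕ) :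
    g.ρ ε ^ (-(a : ℤ)) * g.ρ ε ^ (-(b : ℤ)) = g.ρ ε ^ (-((a + b : ℕ) : ℤ)) := by
  have hρ := g.pos ε hε hε1
  rw [← zpow_add₀ hρ.ne']
  congr 1
  push_cast
  ring

theorem Gauge.aux_invpow (g : Gauge) {ε : ℝ} (hε : 0 < ε) (hε1 : ε ≤ 1) (c : ℕ) :
    (g.ρ ε)⁻¹ ^ c = g.ρ ε ^ (-(c : ℤ)) := by
  rw [inv_pow, ← zpow_natCast (g.ρ ε) c, ← zpow_neg]

set_option maxHeartbeats 1000000 in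
/-- root test for hyperseries. -/
theorem stmt6 (g : Gauge) (A : ℕ → ℝ → ℂ) (hA : g.SMod A)
    (k : ℝ → ℕ) (hk : g.NMod k) (L : ℝ → ℝ) (hLmod : g.Mod L)
    (hL0 : Rt.lt g (GQ.zero g ℝ) (GQ.mk g L hLmod))
    (hL1 : Rt.lt g (GQ.mk g L hLmod) (GQ.one g ℝ))
    (hroot : EvS fun ε => ∀ n : ℕ, k ε ≤ n → ‖A n ε‖ ^ ((n : ℝ)⁻¹) ≤ L ε) :
    ∃ hS : g.SMod fun n ε => ‖A n ε‖,
      (∃ t : Rt g, HSConv g (fun n ε => ‖A n ε‖) hS t) ∧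
      ∃ s : Ct g, HSConv g A hA s := by
    classical
  -- Step 1: from L < 1 extract m0 with L ε ≤ 1 - ρ^(m0+1) eventually
  obtain ⟨a1, b1, ha1, hb1, m0, hm0⟩ := hL1
  have hnegA : g.Negl fun ε => a1.1 ε - L ε := Quotient.exact ha1
  have hnegB : g.Negl fun ε => b1.1 ε - 1 := Quotient.exact hb1
  have hF2 : EvS fun ε => L ε ≤ 1 - g.ρ ε ^ (m0 + 1) := by
    refine (((hnegA (m0+2)).and (hnegB (m0+2))).and
      (hm0.and (g.evs_le (by norm_num : (0:ℝ) < 1/2)))).mono fun ε hε hε1 h => ?_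
    obtain ⟨⟨h1, h2⟩, h3, h4⟩ := h
    have hρ := g.pos ε hε hε1
    rw [Real.norm_eq_abs] at h1 h2
    have hb1' : -g.ρ ε ^ (m0+2) ≤ a1.1 ε - L ε ∧ a1.1 ε - L ε ≤ g.ρ ε ^ (m0+2) :=
      abs_le.mp h1
    have hb2' : -g.ρ ε ^ (m0+2) ≤ b1.1 ε - 1 ∧ b1.1 ε - 1 ≤ g.ρ ε ^ (m0+2) :=
      abs_le.mp h2
    have e1 : g.ρ ε ^ (m0+1) = g.ρ ε ^ m0 * g.ρ ε := pow_succ _ _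
    have e2 : g.ρ ε ^ (m0+2) = g.ρ ε ^ m0 * g.ρ ε * g.ρ ε := by ring
    have hpm : 0 < g.ρ ε ^ m0 := pow_pos hρ _
    have hfac : (0:ℝ) ≤ 1 - g.ρ ε - 2 * (g.ρ ε * g.ρ ε) := by nlinarith
    have key : (0:ℝ) ≤ g.ρ ε ^ m0 * (1 - g.ρ ε - 2 * (g.ρ ε * g.ρ ε)) :=
      mul_nonneg hpm.le hfac
    linarith [hb1'.1, hb2'.2, h3, key]
  -- Step 2: uniform bound on initial terms via argmax
  have hNNex : ∀ ε : ℝ, ∃ j, j ∈ Finset.range (k ε + 1) ∧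
      ∀ i ∈ Finset.range (k ε + 1), ‖A i ε‖ ≤ ‖A j ε‖ := by
    intro ε
    obtain ⟨j, hj, hmax⟩ := Finset.exists_max_image (Finset.range (k ε + 1))
      (fun n => ‖A n ε‖) ⟨0, Finset.mem_range.mpr (by omega)⟩
    exact ⟨j, hj, hmax⟩
  choose NN hNN1 hNN2 using hNNex
  have hNNmod : g.NMod NN := hk.mono fun ε => by
    have := Finset.mem_range.mp (hNN1 ε); omega
  obtain ⟨K, hK⟩ := hA.termMod hNNmod
  obtain ⟨K2, hK2⟩ := hk
  -- Step 3: the eventual package of facts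
  have hGood : EvS fun ε =>
      (∀ n : ℕ, k ε ≤ n → ‖A n ε‖ ^ ((n : ℝ)⁻¹) ≤ L ε) ∧
      L ε ≤ 1 - g.ρ ε ^ (m0 + 1) ∧
      ‖A (NN ε) ε‖ ≤ g.ρ ε ^ (-(K : ℤ)) ∧
      (k ε : ℝ) ≤ g.ρ ε ^ (-(K2 : ℤ)) ∧
      g.ρ ε ≤ 1/2 := by
    refine (((hroot.and hF2).and (hK.and hK2)).and
      (g.evs_le (by norm_num : (0:ℝ) < 1/2))).mono fun ε hε hε1 h => ?_
    obtain ⟨⟨⟨h1, h2⟩, h3, h4⟩, h5⟩ := h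
    refine ⟨h1, h2, h3, ?_, h5⟩
    rw [Real.norm_eq_abs, abs_of_nonneg (Nat.cast_nonneg _)] at h4
    exact h4
  -- Step 4: basic per-ε consequences
  have base : ∀ ε, 0 < ε → ε ≤ 1 →
      (∀ n : ℕ, k ε ≤ n → ‖A n ε‖ ^ ((n : ℝ)⁻¹) ≤ L ε) →
      L ε ≤ 1 - g.ρ ε ^ (m0 + 1) →
      0 ≤ L ε ∧ L ε < 1 ∧ (∀ n, k ε + 1 ≤ n → ‖A n ε‖ ≤ L ε ^ n) ∧
        Summable (fun n => ‖A n ε‖) := by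
    intro ε hε hε1 hr hf2
    have hρ := g.pos ε hε hε1
    have hL0' : 0 ≤ L ε := le_trans (Real.rpow_nonneg (norm_nonneg _) _) (hr (k ε) le_rfl)
    have hL1' : L ε < 1 := by nlinarith [pow_pos hρ (m0+1)]
    have hfg : ∀ n, k ε + 1 ≤ n → ‖A n ε‖ ≤ L ε ^ n := by
      intro n hn
      have h1 := hr n (by omega)
      have h2 : (‖A n ε‖ ^ ((n : ℝ)⁻¹)) ^ n = ‖A n ε‖ :=
        Real.rpow_inv_natCast_pow (norm_nonneg _) (by omega)
      rw [← h2]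
      exact pow_le_pow_left₀ (Real.rpow_nonneg (norm_nonneg _) _) h1 n
    exact ⟨hL0', hL1', hfg, aux_summable (fun n => norm_nonneg _) hL0' hL1' hfg⟩
  -- Step 5: bound on the total sum
  have httot : ∀ ε, 0 < ε → ε ≤ 1 →
      (∀ n : ℕ, k ε ≤ n → ‖A n ε‖ ^ ((n : ℝ)⁻¹) ≤ L ε) →
      L ε ≤ 1 - g.ρ ε ^ (m0 + 1) →
      ‖A (NN ε) ε‖ ≤ g.ρ ε ^ (-(K : ℤ)) →
      (k ε : ℝ) ≤ g.ρ ε ^ (-(K2 : ℤ)) →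
      g.ρ ε ≤ 1/2 →
      (∑' n : ℕ, ‖A n ε‖) ≤ g.ρ ε ^ (-((K2 + K + m0 + 2 + 1 : ℕ) : ℤ)) := by
    intro ε hε hε1 hr hf2 hk' hk2 hhalf
    have hρ := g.pos ε hε hε1
    obtain ⟨hL0', hL1', hfg, hsum⟩ := base ε hε hε1 hr hf2
    have hsplit := hsum.sum_add_tsum_nat_add (k ε + 1)
    have hpart : ∑ n ∈ Finset.range (k ε + 1), ‖A n ε‖ ≤
        ((k ε : ℝ) + 1) * g.ρ ε ^ (-(K : ℤ)) := by
      have hb := Finset.sum_le_card_nsmul (Finset.range (k ε + 1)) (fun n => ‖A n ε‖)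
        (g.ρ ε ^ (-(K : ℤ))) (fun i hi => (hNN2 ε i hi).trans hk')
      rw [Finset.card_range, nsmul_eq_mul] at hb
      push_cast at hb
      exact hb
    have hkk : (k ε : ℝ) + 1 ≤ g.ρ ε ^ (-((K2 + 1 : ℕ) : ℤ)) := by
      have h1 := g.aux_one_le hε hε1 K2
      have h2 := g.aux_two hε hε1 hhalf K2
      linarith
    have hpart2 : ∑ n ∈ Finset.range (k ε + 1), ‖A n ε‖ ≤
        g.ρ ε ^ (-((K2 + 1 + K : ℕ) : ℤ)) := by
      calc ∑ n ∈ Finset.range (k ε + 1), ‖A n ε‖ ≤ ((k ε : ℝ) + 1) * g.ρ ε ^ (-(K : ℤ)) := hpart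
        _ ≤ g.ρ ε ^ (-((K2 + 1 : ℕ) : ℤ)) * g.ρ ε ^ (-(K : ℤ)) :=
            mul_le_mul_of_nonneg_right hkk (zpow_nonneg hρ.le _)
        _ = g.ρ ε ^ (-((K2 + 1 + K : ℕ) : ℤ)) := g.aux_mul hε hε1 (K2 + 1) K
    have htl : ∑' n : ℕ, ‖A (n + (k ε + 1)) ε‖ ≤ g.ρ ε ^ (-((m0 + 1 : ℕ) : ℤ)) := by
      have h1 := aux_tail (fun n => norm_nonneg _) hL0' hL1' hfg (le_refl (k ε + 1))
      have hx : (0:ℝ) < g.ρ ε ^ (m0 + 1) := pow_pos hρ _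
      have hinv : (1 - L ε)⁻¹ ≤ (g.ρ ε ^ (m0 + 1))⁻¹ := by
        apply inv_anti₀ hx
        linarith
      have h2 : L ε ^ (k ε + 1) * (1 - L ε)⁻¹ ≤ 1 * (g.ρ ε ^ (m0 + 1))⁻¹ :=
        mul_le_mul (pow_le_one₀ hL0' hL1'.le) hinv (inv_nonneg.mpr (by linarith)) one_pos.le
      have e : (g.ρ ε ^ (m0 + 1))⁻¹ = g.ρ ε ^ (-((m0 + 1 : ℕ) : ℤ)) := by
        rw [← zpow_natCast (g.ρ ε), ← zpow_neg]
      rw [one_mul, e] at h2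
      exact h1.trans h2
    have hmono1 := g.zpow_neg_le hε hε1 (show K2 + 1 + K ≤ K2 + K + m0 + 2 by omega)
    have hmono2 := g.zpow_neg_le hε hε1 (show m0 + 1 ≤ K2 + K + m0 + 2 by omega)
    have hstep := g.aux_two hε hε1 hhalf (K2 + K + m0 + 2)
    rw [← hsplit]
    calc (∑ n ∈ Finset.range (k ε + 1), ‖A n ε‖) + ∑' n : ℕ, ‖A (n + (k ε + 1)) ε‖
        ≤ g.ρ ε ^ (-((K2 + 1 + K : ℕ) : ℤ)) + g.ρ ε ^ (-((m0 + 1 : ℕ) : ℤ)) :=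
          add_le_add hpart2 htl
      _ ≤ g.ρ ε ^ (-((K2 + K + m0 + 2 : ℕ) : ℤ)) + g.ρ ε ^ (-((K2 + K + m0 + 2 : ℕ) : ℤ)) :=
          add_le_add hmono1 hmono2
      _ = 2 * g.ρ ε ^ (-((K2 + K + m0 + 2 : ℕ) : ℤ)) := by ring
      _ ≤ g.ρ ε ^ (-((K2 + K + m0 + 2 + 1 : ℕ) : ℤ)) := hstep
  -- Step 6: moderateness of the sum of norms over hypersums
  have hS : g.SMod fun n ε => ‖A n ε‖ := by
    intro N hN
    refine ⟨K2 + K + m0 + 2 + 1, hGood.mono fun ε hε hε1 hg => ?_⟩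
    obtain ⟨hr, hf2, hk', hk2, hhalf⟩ := hg
    obtain ⟨hL0', hL1', hfg, hsum⟩ := base ε hε hε1 hr hf2
    show ‖∑ n ∈ Finset.range (N ε + 1), ‖A n ε‖‖ ≤ _
    rw [Real.norm_eq_abs, abs_of_nonneg (Finset.sum_nonneg fun i _ => norm_nonneg _)]
    exact (Summable.sum_le_tsum _ (fun i _ => norm_nonneg _) hsum).trans
      (httot ε hε hε1 hr hf2 hk' hk2 hhalf)
  -- Step 7: moderateness of the candidate limits
  have tmod : g.Mod fun ε => ∑' n : ℕ, ‖A n ε‖ := by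
    refine ⟨K2 + K + m0 + 2 + 1, hGood.mono fun ε hε hε1 hg => ?_⟩
    obtain ⟨hr, hf2, hk', hk2, hhalf⟩ := hg
    show ‖∑' n : ℕ, ‖A n ε‖‖ ≤ _
    rw [Real.norm_eq_abs, abs_of_nonneg (tsum_nonneg fun n => norm_nonneg _)]
    exact httot ε hε hε1 hr hf2 hk' hk2 hhalf
  have smodC : g.Mod fun ε => ∑' n : ℕ, A n ε := by
    refine ⟨K2 + K + m0 + 2 + 1, hGood.mono fun ε hε hε1 hg => ?_⟩
    obtain ⟨hr, hf2, hk', hk2, hhalf⟩ := hg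
    obtain ⟨hL0', hL1', hfg, hsum⟩ := base ε hε hε1 hr hf2
    exact (norm_tsum_le_tsum_norm hsum).trans (httot ε hε hε1 hr hf2 hk' hk2 hhalf)
  -- Step 8: the tail estimate
  have hTail : ∀ q : ℕ, ∀ ε, 0 < ε → ε ≤ 1 →
      (∀ n : ℕ, k ε ≤ n → ‖A n ε‖ ^ ((n : ℝ)⁻¹) ≤ L ε) →
      L ε ≤ 1 - g.ρ ε ^ (m0 + 1) →
      ∀ N : ℕ, k ε + ⌈(g.ρ ε)⁻¹ ^ (q + 1 + 2 * (m0 + 1))⌉₊ ≤ N →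
      ∑' n : ℕ, ‖A (n + (N + 1)) ε‖ ≤ g.ρ ε ^ (q + 1) := by
    intro q ε hε hε1 hr hf2 N hN
    have hρ := g.pos ε hε hε1
    obtain ⟨hL0', hL1', hfg, hsum⟩ := base ε hε hε1 hr hf2
    have hx0 : (0:ℝ) < g.ρ ε ^ (m0 + 1) := pow_pos hρ _
    have hx1 : g.ρ ε ^ (m0 + 1) ≤ 1 := pow_le_one₀ hρ.le (g.le_one ε hε hε1)
    have h1 : ∑' n : ℕ, ‖A (n + (N + 1)) ε‖ ≤ L ε ^ (N + 1) * (1 - L ε)⁻¹ :=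
      aux_tail (fun n => norm_nonneg _) hL0' hL1' hfg (by omega)
    have h2 : L ε ^ (N + 1) ≤ (1 - g.ρ ε ^ (m0 + 1)) ^ (N + 1) :=
      pow_le_pow_left₀ hL0' hf2 _
    have hNx : (0:ℝ) < ((N + 1 : ℕ) : ℝ) * g.ρ ε ^ (m0 + 1) := by positivity
    have h3 := aux_bernoulli hx0.le hx1 (n := N + 1) hNx
    have hceil : (g.ρ ε)⁻¹ ^ (q + 1 + 2 * (m0 + 1)) ≤ ((N + 1 : ℕ) : ℝ) := by
      have hc : ⌈(g.ρ ε)⁻¹ ^ (q + 1 + 2 * (m0 + 1))⌉₊ ≤ N + 1 := by omega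
      calc (g.ρ ε)⁻¹ ^ (q + 1 + 2 * (m0 + 1))
          ≤ (⌈(g.ρ ε)⁻¹ ^ (q + 1 + 2 * (m0 + 1))⌉₊ : ℝ) := Nat.le_ceil _
        _ ≤ ((N + 1 : ℕ) : ℝ) := by exact_mod_cast hc
    have h4 : (((N + 1 : ℕ) : ℝ) * g.ρ ε ^ (m0 + 1))⁻¹ ≤
        ((g.ρ ε)⁻¹ ^ (q + 1 + 2 * (m0 + 1)) * g.ρ ε ^ (m0 + 1))⁻¹ := by
      apply inv_anti₀ (by positivity)
      exact mul_le_mul_of_nonneg_right hceil hx0.le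
    have h5 : ((g.ρ ε)⁻¹ ^ (q + 1 + 2 * (m0 + 1)) * g.ρ ε ^ (m0 + 1))⁻¹ =
        g.ρ ε ^ (q + 1 + (m0 + 1)) := by
      rw [g.aux_invpow hε hε1, ← zpow_natCast (g.ρ ε) (m0 + 1), ← zpow_add₀ hρ.ne', ← zpow_neg,
        ← zpow_natCast (g.ρ ε) (q + 1 + (m0 + 1))]
      congr 1
      push_cast
      ring
    have hinv : (1 - L ε)⁻¹ ≤ (g.ρ ε ^ (m0 + 1))⁻¹ := by
      apply inv_anti₀ hx0
      linarith
    have h6 : L ε ^ (N + 1) ≤ g.ρ ε ^ (q + 1 + (m0 + 1)) := by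
      calc L ε ^ (N + 1) ≤ (1 - g.ρ ε ^ (m0 + 1)) ^ (N + 1) := h2
        _ ≤ (((N + 1 : ℕ) : ℝ) * g.ρ ε ^ (m0 + 1))⁻¹ := h3
        _ ≤ _ := h4.trans (le_of_eq h5)
    calc ∑' n : ℕ, ‖A (n + (N + 1)) ε‖ ≤ L ε ^ (N + 1) * (1 - L ε)⁻¹ := h1
      _ ≤ g.ρ ε ^ (q + 1 + (m0 + 1)) * (g.ρ ε ^ (m0 + 1))⁻¹ :=
          mul_le_mul h6 hinv (inv_nonneg.mpr (by linarith)) (by positivity)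
      _ = g.ρ ε ^ (q + 1) := by
          rw [pow_add, mul_assoc, mul_inv_cancel₀ hx0.ne', mul_one]
  -- Step 9: moderateness of the index thresholds
  have hMmod : ∀ q : ℕ, g.NMod fun ε => k ε + ⌈(g.ρ ε)⁻¹ ^ (q + 1 + 2 * (m0 + 1))⌉₊ := by
    intro q
    refine ⟨K2 + (q + 1 + 2 * (m0 + 1)) + 1 + 1, hGood.mono fun ε hε hε1 hg => ?_⟩
    obtain ⟨_, _, _, hk2, hhalf⟩ := hg
    have hρ := g.pos ε hε hε1
    show ‖((k ε + ⌈(g.ρ ε)⁻¹ ^ (q + 1 + 2 * (m0 + 1))⌉₊ : ℕ) : ℝ)‖ ≤ _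
    rw [Real.norm_eq_abs, abs_of_nonneg (Nat.cast_nonneg _), Nat.cast_add]
    have hrp : (0:ℝ) ≤ (g.ρ ε)⁻¹ ^ (q + 1 + 2 * (m0 + 1)) := by positivity
    have hceil : (⌈(g.ρ ε)⁻¹ ^ (q + 1 + 2 * (m0 + 1))⌉₊ : ℝ) ≤
        g.ρ ε ^ (-((q + 1 + 2 * (m0 + 1) : ℕ) : ℤ)) + 1 := by
      calc (⌈(g.ρ ε)⁻¹ ^ (q + 1 + 2 * (m0 + 1))⌉₊ : ℝ)
          ≤ (g.ρ ε)⁻¹ ^ (q + 1 + 2 * (m0 + 1)) + 1 := (Nat.ceil_lt_add_one hrp).le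
        _ = _ := by rw [g.aux_invpow hε hε1]
    have hone := g.aux_one_le hε hε1 (K2 + (q + 1 + 2 * (m0 + 1)))
    have m1' := g.zpow_neg_le hε hε1 (show K2 ≤ K2 + (q + 1 + 2 * (m0 + 1)) by omega)
    have m2' := g.zpow_neg_le hε hε1
      (show q + 1 + 2 * (m0 + 1) ≤ K2 + (q + 1 + 2 * (m0 + 1)) by omega)
    have t1 := g.aux_two hε hε1 hhalf (K2 + (q + 1 + 2 * (m0 + 1)))
    have t2 := g.aux_two hε hε1 hhalf (K2 + (q + 1 + 2 * (m0 + 1)) + 1)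
    have hy : (0:ℝ) ≤ g.ρ ε ^ (-((K2 + (q + 1 + 2 * (m0 + 1)) : ℕ) : ℤ)) := zpow_nonneg hρ.le _
    linarith
  -- Step 10: conclude
  refine ⟨hS, ⟨GQ.mk g (fun ε => ∑' n : ℕ, ‖A n ε‖) tmod, ?_⟩,
    ⟨GQ.mk g (fun ε => ∑' n : ℕ, A n ε) smodC, ?_⟩⟩
  · -- hyperlimit of partial sums of norms
    intro q
    refine ⟨Nt.mk g _ (hMmod q), ?_⟩
    intro n hn
    obtain ⟨asub, bsub, hasub, hbsub, hab⟩ := hn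
    have hEq : EvS fun ε => asub.1 ε = k ε + ⌈(g.ρ ε)⁻¹ ^ (q + 1 + 2 * (m0 + 1))⌉₊ :=
      natEqEv g (Quotient.exact hasub)
    refine ⟨⟨fun ε => ∑ i ∈ Finset.range (bsub.1 ε + 1), ‖A i ε‖, hS bsub.1 bsub.2⟩,
      ⟨fun ε => ∑' n : ℕ, ‖A n ε‖, tmod⟩, ⟨fun ε => g.ρ ε ^ q, g.mod_pow q⟩,
      ?_, rfl, rfl, q + 1, ?_⟩
    · rw [← hbsub]; rfl
    · refine (hGood.and (hEq.and hab)).mono fun ε hε hε1 hh => ?_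
      obtain ⟨⟨hr, hf2, hk', hk2, hhalf⟩, heq, hle⟩ := hh
      have hρ := g.pos ε hε hε1
      obtain ⟨hL0', hL1', hfg, hsum⟩ := base ε hε hε1 hr hf2
      have hM : k ε + ⌈(g.ρ ε)⁻¹ ^ (q + 1 + 2 * (m0 + 1))⌉₊ ≤ bsub.1 ε := heq ▸ hle
      have htail := hTail q ε hε hε1 hr hf2 (bsub.1 ε) hM
      have hsplit := hsum.sum_add_tsum_nat_add (bsub.1 ε + 1)
      show ‖(∑ i ∈ Finset.range (bsub.1 ε + 1), ‖A i ε‖) - ∑' n : ℕ, ‖A n ε‖‖ +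
        g.ρ ε ^ (q + 1) ≤ g.ρ ε ^ q
      have htnn : (0:ℝ) ≤ ∑' n : ℕ, ‖A (n + (bsub.1 ε + 1)) ε‖ :=
        tsum_nonneg fun n => norm_nonneg _
      have habs : ‖(∑ i ∈ Finset.range (bsub.1 ε + 1), ‖A i ε‖) - ∑' n : ℕ, ‖A n ε‖‖ =
          ∑' n : ℕ, ‖A (n + (bsub.1 ε + 1)) ε‖ := by
        rw [Real.norm_eq_abs, abs_sub_comm, ← hsplit, add_sub_cancel_left]
        exact abs_of_nonneg htnn
      rw [habs]
      have e : g.ρ ε ^ (q + 1) = g.ρ ε ^ q * g.ρ ε := pow_succ _ _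
      nlinarith [pow_nonneg hρ.le q]
  · -- hyperlimit of partial sums of A
    intro q
    refine ⟨Nt.mk g _ (hMmod q), ?_⟩
    intro n hn
    obtain ⟨asub, bsub, hasub, hbsub, hab⟩ := hn
    have hEq : EvS fun ε => asub.1 ε = k ε + ⌈(g.ρ ε)⁻¹ ^ (q + 1 + 2 * (m0 + 1))⌉₊ :=
      natEqEv g (Quotient.exact hasub)
    refine ⟨⟨fun ε => ∑ i ∈ Finset.range (bsub.1 ε + 1), A i ε, hA bsub.1 bsub.2⟩,
      ⟨fun ε => ∑' n : ℕ, A n ε, smodC⟩, ⟨fun ε => g.ρ ε ^ q, g.mod_pow q⟩,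
      ?_, rfl, rfl, q + 1, ?_⟩
    · rw [← hbsub]; rfl
    · refine (hGood.and (hEq.and hab)).mono fun ε hε hε1 hh => ?_
      obtain ⟨⟨hr, hf2, hk', hk2, hhalf⟩, heq, hle⟩ := hh
      have hρ := g.pos ε hε hε1
      obtain ⟨hL0', hL1', hfg, hsum⟩ := base ε hε hε1 hr hf2
      have hsumA : Summable fun n : ℕ => A n ε := Summable.of_norm hsum
      have hM : k ε + ⌈(g.ρ ε)⁻¹ ^ (q + 1 + 2 * (m0 + 1))⌉₊ ≤ bsub.1 ε := heq ▸ hle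
      have htail := hTail q ε hε hε1 hr hf2 (bsub.1 ε) hM
      have hsplitA := hsumA.sum_add_tsum_nat_add (bsub.1 ε + 1)
      show ‖(∑ i ∈ Finset.range (bsub.1 ε + 1), A i ε) - ∑' n : ℕ, A n ε‖ +
        g.ρ ε ^ (q + 1) ≤ g.ρ ε ^ q
      have hb : ‖(∑ i ∈ Finset.range (bsub.1 ε + 1), A i ε) - ∑' n : ℕ, A n ε‖ ≤
          ∑' n : ℕ, ‖A (n + (bsub.1 ε + 1)) ε‖ := by
        rw [norm_sub_rev, ← hsplitA, add_sub_cancel_left]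
        exact norm_tsum_le_tsum_norm ((summable_nat_add_iff _).mpr hsum)
      have e : g.ρ ε ^ (q + 1) = g.ρ ε ^ q * g.ρ ε := pow_succ _ _
      nlinarith [pow_nonneg hρ.le q]
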